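/- arXiv:2106.15301 — 3 statements merged into one kernel-verified Lean document; each statement's English description precedes it below -/
import Mathlib

section
/- Let G be a finite group and let F : (G → ℝ) → (G → ℝ) be a linear map that is equivariant with respect to the left translation action of G, i.e. F(a·f) = a·F(f) for all a ∈ G and all f : G → ℝ. Then there exists a weight kernel w : G → ℝ such that for all f : G → ℝ and all g ∈ G, F(f)(g) = ∑_{h ∈ G} f(h) · w(g⁻¹h); that is, every linear group-equivariant operator is a correlation. -/
open scoped BigOperators

/-- On a finite group `G`, every linear operator `F : (G → ℝ) → (G → ℝ)` that is
equivariant with respect to the left translation (pullback) action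
`(a·f)(h) = f(a⁻¹h)` is a correlation: there is a weight kernel `w : G → ℝ` with
`F(f)(g) = ∑_{h ∈ G} f(h) · w(g⁻¹h)` for all `f` and `g`. -/
theorem linear_equivariant_is_correlation {G : Type*} [Group G] [Fintype G]
    (F : (G → ℝ) → (G → ℝ)) (hlin : IsLinearMap ℝ F)
    (hequiv : ∀ (a : G) (f : G → ℝ),
      F (fun h => f (a⁻¹ * h)) = fun g => F f (a⁻¹ * g)) :
    ∃ w : G → ℝ, ∀ (f : G → ℝ) (g : G),
      F f g = ∑ h : G, f h * w (g⁻¹ * h) := by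
  classical
  set δ : G → G → ℝ := fun h x => if x = h then 1 else 0 with hδ
  refine ⟨fun k => F (δ 1) k⁻¹, fun f g => ?_⟩
  have hdelta : ∀ h : G, δ h = fun x => δ 1 (h⁻¹ * x) := by
    intro h
    funext x
    simp only [hδ, inv_mul_eq_one]
    by_cases hx : x = h
    · simp [hx]
    · rw [if_neg hx, if_neg (fun he => hx he.symm)]
  have hFdelta : ∀ h : G, F (δ h) = fun g => F (δ 1) (h⁻¹ * g) := by
    intro h
    rw [hdelta h]
    exact hequiv h (δ 1)
  have hf : f = ∑ h : G, f h • δ h := by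
    funext x
    simp [hδ, Finset.sum_apply]
  let L : (G → ℝ) →ₗ[ℝ] (G → ℝ) := IsLinearMap.mk' F hlin
  have hFL : F f = L f := rfl
  conv_lhs => rw [hFL, hf, map_sum]
  simp only [map_smul, Finset.sum_apply, Pi.smul_apply, smul_eq_mul]
  refine Finset.sum_congr rfl fun h _ => ?_
  have : L (δ h) = F (δ h) := rfl
  rw [this, hFdelta h]
  simp [mul_inv_rev]
end

section
/- Let G be a finite group acting transitively on a finite set M, and let F : (M → ℝ) → (G → ℝ) be a linear map that is equivariant, i.e. F(a·f) = a·F(f) for all a ∈ G and all f : M → ℝ, where (a·f)(x) = f(a⁻¹·x) and (a·F(f))(g) = F(f)(a⁻¹g). Then there exists a weight kernel w : M → ℝ such that for all f : M → ℝ and all g ∈ G, F(f)(g) = ∑_{x ∈ M} f(x) · w(g⁻¹·x); that is, every linear group-equivariant operator from functions on the homogeneous space M to functions on G is a correlation. -/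
open scoped BigOperators

/-- Let a finite group `G` act transitively on a finite set `M` (a homogeneous
space). Every linear operator `F : (M → ℝ) → (G → ℝ)` that is equivariant, i.e.
`F(a·f)(g) = F(f)(a⁻¹g)` with `(a·f)(x) = f(a⁻¹·x)`, is a correlation: there is a
weight kernel `w : M → ℝ` with `F(f)(g) = ∑_{x ∈ M} f(x) * w(g⁻¹·x)`. -/
theorem linear_equivariant_is_correlation_homogeneous
    {G M : Type*} [Group G] [Fintype G] [Fintype M] [MulAction G M]
    [MulAction.IsPretransitive G M]
    (F : (M → ℝ) → (G → ℝ)) (hlin : IsLinearMap ℝ F)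
    (hequiv : ∀ (a : G) (f : M → ℝ),
      F (fun x => f (a⁻¹ • x)) = fun g => F f (a⁻¹ * g)) :
    ∃ w : M → ℝ, ∀ (f : M → ℝ) (g : G),
      F f g = ∑ x : M, f x * w (g⁻¹ • x) := by
  classical
  set δ : M → M → ℝ := fun x y => if y = x then 1 else 0 with hδ
  refine ⟨fun y => F (δ y) 1, fun f g => ?_⟩
  set L : (M → ℝ) →ₗ[ℝ] (G → ℝ) := IsLinearMap.mk' F hlin with hL
  have hf : f = ∑ x : M, f x • δ x := by
    funext y
    simp [δ, Finset.sum_apply, Finset.sum_ite_eq]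
  have hFf : F f g = ∑ x : M, f x * F (δ x) g := by
    conv_lhs => rw [hf]
    have : L (∑ x : M, f x • δ x) = ∑ x : M, f x • L (δ x) := by
      rw [map_sum]; simp
    have h2 := congrFun this g
    simp only [hL, IsLinearMap.mk'_apply, Finset.sum_apply, Pi.smul_apply,
      smul_eq_mul] at h2
    exact h2
  rw [hFf]
  refine Finset.sum_congr rfl fun x _ => ?_
  congr 1
  have h := hequiv g⁻¹ (δ x)
  have h1 : (fun y => δ x (g⁻¹⁻¹ • y)) = δ (g⁻¹ • x) := by
    funext y
    simp only [δ, inv_inv]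
    congr 1
    simp [eq_comm, smul_eq_iff_eq_inv_smul]
    constructor
    · intro hy; rw [hy]; simp
    · intro hy; rw [hy]; simp
  rw [h1] at h
  have := congrFun h 1
  simpa using this.symm
end

section
/- Let G be a finite group and let F : (G → ℝ) → (G → ℝ) be a (non-linear) map of the form F = ∑_{i ∈ I} F_{i,1} · F_{i,2} (a finite sum, with pointwise products), where each F_{i,k} : (G → ℝ) → (G → ℝ) is linear and equivariant with respect to the left translation action of G. Then there exist second order kernels {w_i : G × G → ℝ}_{i ∈ I} such that for all f : G → ℝ and all g ∈ G, F(f)(g) = ∑_{i ∈ I} (f ⋆₂ w_i)(g), where (f ⋆₂ w_i)(g) = ∑_{h₁ ∈ G} ∑_{h₂ ∈ G} f(h₁) f(h₂) · w_i(g⁻¹h₁, g⁻¹h₂). Moreover each w_i can be taken separable, w_i(h₁, h₂) = w_{i,1}(h₁) · w_{i,2}(h₂). -/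
open scoped BigOperators

lemma conv_rep {G : Type*} [Group G] [Fintype G] [DecidableEq G]
    (F : (G → ℝ) → (G → ℝ)) (hlin : IsLinearMap ℝ F)
    (hequiv : ∀ (a : G) (f : G → ℝ),
      F (fun h => f (a⁻¹ * h)) = fun g => F f (a⁻¹ * g))
    (f : G → ℝ) (g : G) :
    F f g = ∑ h : G, f h * F (fun x => if x = 1 then (1:ℝ) else 0) ((g⁻¹ * h)⁻¹) := by
  classical
  set δ : G → ℝ := fun x => if x = 1 then (1:ℝ) else 0 with hδ
  have hf : f = ∑ h : G, f h • (fun x => if x = h then (1:ℝ) else 0) := by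
    funext x
    simp [Finset.sum_apply]
  have hL : ∀ u, (hlin.mk' F) u = F u := fun u => rfl
  calc F f g = (hlin.mk' F) f g := rfl
    _ = ∑ h : G, f h * F (fun x => if x = h then (1:ℝ) else 0) g := by
        conv_lhs => rw [hf]
        rw [map_sum]
        simp only [Finset.sum_apply]
        refine Finset.sum_congr rfl fun h _ => ?_
        rw [map_smul]
        simp [hL]
    _ = _ := by
        refine Finset.sum_congr rfl fun h _ => ?_
        congr 1
        have : (fun x => if x = h then (1:ℝ) else 0) = fun x => δ (h⁻¹ * x) := by
          funext x
          simp [hδ, eq_comm, inv_mul_eq_one]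
        rw [this, hequiv h]
        simp [mul_assoc]

/-- On a finite group `G`, any operator of the form `F = ∑_{i ∈ I} F_{i,1}·F_{i,2}`
(a finite sum of pointwise products), with each `F_{i,k} : (G → ℝ) → (G → ℝ)`
linear and equivariant for the left translation action `(a·f)(h) = f(a⁻¹h)`,
can be written as a sum of second order Volterra correlations
`F(f)(g) = ∑_{i ∈ I} ∑_{h₁,h₂ ∈ G} f(h₁) f(h₂) · w_i(g⁻¹h₁, g⁻¹h₂)`,
where moreover each kernel `w_i` can be taken separable:
`w_i(h₁,h₂) = w_{i,1}(h₁) · w_{i,2}(h₂)`. -/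
theorem sum_of_products_is_volterra {G I : Type*} [Group G] [Fintype G] [Fintype I]
    (F₁ F₂ : I → (G → ℝ) → (G → ℝ))
    (hlin₁ : ∀ i, IsLinearMap ℝ (F₁ i)) (hlin₂ : ∀ i, IsLinearMap ℝ (F₂ i))
    (hequiv₁ : ∀ i (a : G) (f : G → ℝ),
      F₁ i (fun h => f (a⁻¹ * h)) = fun g => F₁ i f (a⁻¹ * g))
    (hequiv₂ : ∀ i (a : G) (f : G → ℝ),
      F₂ i (fun h => f (a⁻¹ * h)) = fun g => F₂ i f (a⁻¹ * g)) :
    ∃ w : I → G × G → ℝ,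
      (∀ (f : G → ℝ) (g : G),
        ∑ i : I, F₁ i f g * F₂ i f g =
          ∑ i : I, ∑ h₁ : G, ∑ h₂ : G,
            f h₁ * f h₂ * w i (g⁻¹ * h₁, g⁻¹ * h₂)) ∧
      (∀ i : I, ∃ w₁ w₂ : G → ℝ, ∀ p : G × G, w i p = w₁ p.1 * w₂ p.2) := by
  classical
  set δ : G → ℝ := fun x => if x = 1 then (1:ℝ) else 0 with hδ
  refine ⟨fun i p => F₁ i δ p.1⁻¹ * F₂ i δ p.2⁻¹, ?_, fun i =>
    ⟨fun x => F₁ i δ x⁻¹, fun x => F₂ i δ x⁻¹, fun p => rfl⟩⟩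
  intro f g
  refine Finset.sum_congr rfl fun i _ => ?_
  rw [conv_rep (F₁ i) (hlin₁ i) (hequiv₁ i) f g,
      conv_rep (F₂ i) (hlin₂ i) (hequiv₂ i) f g, Finset.sum_mul_sum]
  refine Finset.sum_congr rfl fun h₁ _ => Finset.sum_congr rfl fun h₂ _ => ?_
  ring
end
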